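/- arXiv:2212.03113 — 3 statements merged into one kernel-verified Lean document; each statement's English description precedes it below -/
import Mathlib

section
/- Let c ∈ ℝ with c ≠ 0, set A = [[1, c], [0, 1]], and let R : ℕ → M₂(ℝ) satisfy Σ_{n≥0} (n+1)·‖R(n)‖ < ∞ and det(A + R(n)) ≠ 0 for every n. Then there exists a solution ψ : ℕ → ℝ² of ψ(n+1) = (A + R(n))·ψ(n) such that (1/n)·‖ψ(n) − (c·n, 1)ᵀ‖ → 0 as n → ∞; in particular ‖ψ(n)‖ = O(n). -/
attribute [local instance] Matrix.normedAddCommGroup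

/-!
Write `ψ = (x, y)`. Pick a time `n₀` after which `∑ (k + 1) ‖R k‖` is small and take the
solution with `ψ n₀ = (0, 1)`. An induction shows that `ψ` then grows at most linearly while
`y` stays near `1`, so the perturbations `R n ψ n` are summable. Hence `y` converges to some
`L ≠ 0`, and since `x (n + 1) - x n = c y n + o(1)`, Cesàro averaging gives `x n / n → c L`.
Extend `ψ` backwards through the invertible matrices `A + R n` and divide by `L`.
-/

open Filter Topology Finset Matrix

theorem Matrix.norm_mulVec_le {m n α : Type*} [Fintype m] [Fintype n] [NormedRing α]
    (M : Matrix m n α) (v : n → α) : ‖M *ᵥ v‖ ≤ Fintype.card n * ‖M‖ * ‖v‖ := by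
  refine (pi_norm_le_iff_of_nonneg (by positivity)).2 fun i => ?_
  calc ‖(M *ᵥ v) i‖ ≤ ∑ j, ‖M i j‖ * ‖v j‖ :=
        (norm_sum_le _ _).trans (sum_le_sum fun j _ => norm_mul_le _ _)
    _ ≤ ∑ _j : n, ‖M‖ * ‖v‖ := sum_le_sum fun j _ =>
        mul_le_mul (norm_entry_le_entrywise_sup_norm M) (norm_le_pi_norm v j)
          (norm_nonneg _) (norm_nonneg _)
    _ = Fintype.card n * ‖M‖ * ‖v‖ := by simp [mul_assoc]

theorem summable_norm_mulVec_of_norm_le {m : Type*} [Fintype m]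
    {R : ℕ → Matrix m m ℝ} {ψ : ℕ → m → ℝ} {K : ℝ}
    (hR : Summable fun n : ℕ => ((n : ℝ) + 1) * ‖R n‖)
    (hψ : ∀ᶠ n in atTop, ‖ψ n‖ ≤ K * (n + 1)) :
    Summable fun n => ‖R n *ᵥ ψ n‖ := by
  refine .of_norm_bounded_eventually_nat (hR.mul_left (Fintype.card m * K)) ?_
  filter_upwards [hψ] with n hn
  rw [norm_norm]
  calc ‖R n *ᵥ ψ n‖ ≤ Fintype.card m * ‖R n‖ * ‖ψ n‖ := (R n).norm_mulVec_le (ψ n)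
    _ ≤ Fintype.card m * ‖R n‖ * (K * (n + 1)) := by gcongr
    _ = Fintype.card m * K * (((n : ℝ) + 1) * ‖R n‖) := by ring

theorem tendsto_inv_smul_of_tendsto_sub {E : Type*} [NormedAddCommGroup E] [NormedSpace ℝ E]
    {u : ℕ → E} {a : E} (h : Tendsto (fun n => u (n + 1) - u n) atTop (𝓝 a)) :
    Tendsto (fun n : ℕ => (n⁻¹ : ℝ) • u n) atTop (𝓝 a) := by
  have hu (n : ℕ) : (n⁻¹ : ℝ) • u n =
      (n⁻¹ : ℝ) • u 0 + (n⁻¹ : ℝ) • ∑ i ∈ range n, (u (i + 1) - u i) := by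
    rw [sum_range_sub, ← smul_add, add_sub_cancel]
  simp_rw [hu]
  have hinv : Tendsto (fun n : ℕ => (n⁻¹ : ℝ)) atTop (𝓝 0) :=
    (tendsto_inv_atTop_zero (𝕜 := ℝ)).comp tendsto_natCast_atTop_atTop
  simpa using (hinv.smul_const (u 0)).add h.cesaro_smul

theorem exists_forall_sum_Ico_le {f : ℕ → ℝ} (hf : Summable f) (hf0 : ∀ n, 0 ≤ f n) {ε : ℝ}
    (hε : 0 < ε) : ∃ n₀, ∀ n, ∑ k ∈ Ico n₀ n, f k ≤ ε := by
  obtain ⟨n₀, hn₀⟩ := ((tendsto_sum_nat_add f).eventually (ge_mem_nhds hε)).exists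
  refine ⟨n₀, fun n => (le_of_eq ?_).trans ((((summable_nat_add_iff n₀).2 hf).sum_le_tsum
    (range (n - n₀)) fun k _ => hf0 _).trans hn₀)⟩
  rw [sum_Ico_eq_sum_range]
  simp_rw [add_comm n₀]

theorem exists_mulVec_solution_eq {m K : Type*} [Fintype m] [DecidableEq m] [CommRing K]
    (B : ℕ → Matrix m m K) (hB : ∀ n, IsUnit (B n).det) (n₀ : ℕ) (v : m → K) :
    ∃ ψ : ℕ → m → K, (∀ n, ψ (n + 1) = B n *ᵥ ψ n) ∧ ψ n₀ = v := by
  induction n₀ generalizing v with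
  | zero => exact ⟨fun n => Nat.rec v (fun k w => B k *ᵥ w) n, fun _ => rfl, rfl⟩
  | succ n₀ ih =>
    obtain ⟨ψ, hψ, hψn₀⟩ := ih ((B n₀)⁻¹ *ᵥ v)
    refine ⟨ψ, hψ, ?_⟩
    rw [hψ, hψn₀, mulVec_mulVec, mul_nonsing_inv _ (hB n₀), one_mulVec]

theorem jordan_add_mulVec (c : ℝ) (R : Matrix (Fin 2) (Fin 2) ℝ) (v : Fin 2 → ℝ) :
    (!![1, c; 0, 1] + R) *ᵥ v = v + v 1 • ![c, 0] + R *ᵥ v := by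
  ext i; fin_cases i <;> simp [mulVec, dotProduct, Fin.sum_univ_two, vecHead, vecTail] <;> ring

theorem norm_jordan_add_mulVec_le (c : ℝ) (R : Matrix (Fin 2) (Fin 2) ℝ) (v : Fin 2 → ℝ) :
    ‖(!![1, c; 0, 1] + R) *ᵥ v‖ ≤ ‖v‖ + |c| * |v 1| + ‖R *ᵥ v‖ := by
  have hc : ‖(![c, 0] : Fin 2 → ℝ)‖ ≤ |c| :=
    (pi_norm_le_iff_of_nonneg (abs_nonneg c)).2 fun i => by fin_cases i <;> simp
  have hsmul : ‖v 1 • ![c, 0]‖ ≤ |c| * |v 1| := by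
    rw [norm_smul, Real.norm_eq_abs, mul_comm]
    exact mul_le_mul_of_nonneg_right hc (abs_nonneg _)
  rw [jordan_add_mulVec]
  linarith [norm_add₃_le (a := v) (b := v 1 • ![c, 0]) (c := R *ᵥ v)]

theorem abs_jordan_add_mulVec_one_sub_le (c : ℝ) (R : Matrix (Fin 2) (Fin 2) ℝ)
    (v : Fin 2 → ℝ) : |((!![1, c; 0, 1] + R) *ᵥ v) 1 - v 1| ≤ ‖R *ᵥ v‖ := by
  simp only [jordan_add_mulVec, Pi.add_apply, Pi.smul_apply, cons_val_zero, cons_val_one,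
    smul_eq_mul, mul_zero, add_zero, add_sub_cancel_left]
  exact norm_le_pi_norm (R *ᵥ v) 1

section JordanBlock

variable {c : ℝ} {R : ℕ → Matrix (Fin 2) (Fin 2) ℝ} {ψ : ℕ → Fin 2 → ℝ}

theorem norm_le_and_abs_sub_one_le (hψ : ∀ n, ψ (n + 1) = (!![1, c; 0, 1] + R n) *ᵥ ψ n)
    {n₀ : ℕ} (h₀ : ψ n₀ = ![0, 1])
    (hsmall : ∀ n, ∑ k ∈ Ico n₀ n, ((k : ℝ) + 1) * ‖R k‖ ≤ 1 / (4 * (2 * |c| + 2)))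
    {n : ℕ} (hn : n₀ ≤ n) :
    ‖ψ n‖ ≤ (2 * |c| + 2) * (n + 1) ∧
      |ψ n 1 - 1| ≤ 2 * (2 * |c| + 2) * ∑ k ∈ Ico n₀ n, ((k : ℝ) + 1) * ‖R k‖ := by
  -- one step adds at most `2 |c| + 1 / 2 ≤ M` to the bound `M (n + 1)`
  set M := 2 * |c| + 2
  have hM : 2 ≤ M := by linarith [abs_nonneg c]
  have hS (n : ℕ) : 4 * M * ∑ k ∈ Ico n₀ n, ((k : ℝ) + 1) * ‖R k‖ ≤ 1 := by
    have := hsmall n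
    rwa [le_div_iff₀ (by positivity), mul_comm] at this
  induction n, hn using Nat.le_induction with
  | base =>
    have h₀_le : ‖(![0, 1] : Fin 2 → ℝ)‖ ≤ 1 :=
      (pi_norm_le_iff_of_nonneg zero_le_one).2 fun i => by fin_cases i <;> simp
    simp only [h₀, Ico_self, sum_empty, mul_zero, cons_val_one, cons_val_zero, sub_self,
      abs_zero, le_refl, and_true]
    exact h₀_le.trans (by nlinarith [n₀.cast_nonneg (α := ℝ)])
  | succ n hn ih =>
    obtain ⟨hψn, hyn⟩ := ih
    have hSn : ∑ k ∈ Ico n₀ (n + 1), ((k : ℝ) + 1) * ‖R k‖ =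
        ∑ k ∈ Ico n₀ n, ((k : ℝ) + 1) * ‖R k‖ + ((n : ℝ) + 1) * ‖R n‖ := sum_Ico_succ_top hn _
    have hS₀ : 0 ≤ ∑ k ∈ Ico n₀ n, ((k : ℝ) + 1) * ‖R k‖ := sum_nonneg fun k _ => by positivity
    have hr : ‖R n *ᵥ ψ n‖ ≤ 2 * M * (((n : ℝ) + 1) * ‖R n‖) := by
      have := (R n).norm_mulVec_le (ψ n)
      rw [Fintype.card_fin, Nat.cast_ofNat] at this
      nlinarith [norm_nonneg (R n)]
    have hr_le : 2 * M * (((n : ℝ) + 1) * ‖R n‖) ≤ 1 / 2 := by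
      nlinarith [hS (n + 1), norm_nonneg (R n), n.cast_nonneg (α := ℝ)]
    have hy_le : |ψ n 1| ≤ 2 := by
      nlinarith [abs_sub_abs_le_abs_sub (ψ n 1) 1, abs_one (α := ℝ), hS n]
    rw [hψ]
    constructor
    · calc ‖(!![1, c; 0, 1] + R n) *ᵥ ψ n‖ ≤ ‖ψ n‖ + |c| * |ψ n 1| + ‖R n *ᵥ ψ n‖ :=
            norm_jordan_add_mulVec_le c (R n) (ψ n)
        _ ≤ M * (n + 1) + |c| * 2 + 1 / 2 := by gcongr; linarith
        _ ≤ M * ((n + 1 : ℕ) + 1) := by push_cast; linarith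
    · calc |((!![1, c; 0, 1] + R n) *ᵥ ψ n) 1 - 1|
          ≤ |((!![1, c; 0, 1] + R n) *ᵥ ψ n) 1 - ψ n 1| + |ψ n 1 - 1| := abs_sub_le _ _ _
        _ ≤ _ := by
          rw [hSn]
          linarith [abs_jordan_add_mulVec_one_sub_le c (R n) (ψ n)]

theorem summable_and_exists_tendsto_snd_ne_zero
    (hR : Summable fun n : ℕ => ((n : ℝ) + 1) * ‖R n‖)
    (hψ : ∀ n, ψ (n + 1) = (!![1, c; 0, 1] + R n) *ᵥ ψ n) {n₀ : ℕ} (h₀ : ψ n₀ = ![0, 1])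
    (hsmall : ∀ n, ∑ k ∈ Ico n₀ n, ((k : ℝ) + 1) * ‖R k‖ ≤ 1 / (4 * (2 * |c| + 2))) :
    Summable (fun n => ‖R n *ᵥ ψ n‖) ∧ ∃ L ≠ 0, Tendsto (fun n => ψ n 1) atTop (𝓝 L) := by
  have hbound : ∀ᶠ n in atTop, ‖ψ n‖ ≤ (2 * |c| + 2) * (n + 1) ∧ |ψ n 1 - 1| ≤ 1 / 2 := by
    filter_upwards [eventually_ge_atTop n₀] with n hn
    obtain ⟨hψn, hyn⟩ := norm_le_and_abs_sub_one_le hψ h₀ hsmall hn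
    refine ⟨hψn, hyn.trans ?_⟩
    have := hsmall n
    rw [le_div_iff₀ (by positivity)] at this
    linarith
  have hr := summable_norm_mulVec_of_norm_le hR (hbound.mono fun _ h => h.1)
  have hdist : Summable fun n => dist (ψ n 1) (ψ n.succ 1) := by
    refine hr.of_nonneg_of_le (fun _ => dist_nonneg) fun n => ?_
    rw [dist_comm, Real.dist_eq, hψ]
    exact abs_jordan_add_mulVec_one_sub_le c (R n) (ψ n)
  obtain ⟨L, hL⟩ := cauchySeq_tendsto_of_complete (cauchySeq_of_summable_dist hdist)
  have hL1 : |L - 1| ≤ 1 / 2 :=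
    le_of_tendsto ((continuous_abs.tendsto _).comp (hL.sub_const 1)) (hbound.mono fun _ h => h.2)
  refine ⟨hr, L, fun hL0 => ?_, hL⟩
  norm_num [hL0] at hL1

theorem tendsto_inv_mul_norm_sub_of_tendsto
    (hψ : ∀ n, ψ (n + 1) = (!![1, c; 0, 1] + R n) *ᵥ ψ n)
    (hr : Tendsto (fun n => R n *ᵥ ψ n) atTop (𝓝 0))
    (hy : Tendsto (fun n => ψ n 1) atTop (𝓝 1)) :
    Tendsto (fun n : ℕ => (1 / (n : ℝ)) * ‖ψ n - ![c * n, 1]‖) atTop (𝓝 0) := by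
  have hdiff : Tendsto (fun n => ψ (n + 1) - ψ n) atTop (𝓝 ![c, 0]) := by
    have (n : ℕ) : ψ (n + 1) - ψ n = ψ n 1 • ![c, 0] + R n *ᵥ ψ n := by
      rw [hψ, jordan_add_mulVec]; abel
    simp_rw [this]
    simpa using (hy.smul_const ![c, 0]).add hr
  have hinv : Tendsto (fun n : ℕ => (n⁻¹ : ℝ)) atTop (𝓝 0) :=
    (tendsto_inv_atTop_zero (𝕜 := ℝ)).comp tendsto_natCast_atTop_atTop
  have hlim : Tendsto (fun n : ℕ => (n⁻¹ : ℝ) • ψ n - ![c, 0] - (n⁻¹ : ℝ) • ![0, 1])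
      atTop (𝓝 0) := by
    simpa using ((tendsto_inv_smul_of_tendsto_sub hdiff).sub_const ![c, 0]).sub
      (hinv.smul_const ![0, 1])
  refine (tendsto_norm_zero.comp hlim).congr' ?_
  filter_upwards [eventually_ne_atTop 0] with n hn
  have : (n⁻¹ : ℝ) • ψ n - ![c, 0] - (n⁻¹ : ℝ) • ![0, 1] = (n⁻¹ : ℝ) • (ψ n - ![c * n, 1]) := by
    ext i; fin_cases i <;> simp [mul_sub, vecHead, vecTail]; field_simp
  rw [Function.comp_apply, this, norm_smul, Real.norm_eq_abs, abs_inv, Nat.abs_cast, one_div]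

end JordanBlock

theorem stmt12_general (c : ℝ)
    (R : ℕ → Matrix (Fin 2) (Fin 2) ℝ)
    (hR : Summable fun n : ℕ => ((n : ℝ) + 1) * ‖R n‖)
    (hdet : ∀ n : ℕ, (!![(1 : ℝ), c; 0, 1] + R n).det ≠ 0) :
    ∃ ψ : ℕ → Fin 2 → ℝ,
      (∀ n : ℕ, ψ (n + 1) = (!![(1 : ℝ), c; 0, 1] + R n).mulVec (ψ n)) ∧
      Filter.Tendsto (fun n : ℕ => (1 / (n : ℝ)) * ‖ψ n - ![c * n, 1]‖)
        Filter.atTop (nhds 0) := by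
  obtain ⟨n₀, hn₀⟩ := exists_forall_sum_Ico_le hR (fun n => by positivity)
    (show 0 < 1 / (4 * (2 * |c| + 2)) by positivity)
  obtain ⟨ψ, hψ, hψn₀⟩ := exists_mulVec_solution_eq _ (fun n => (hdet n).isUnit) n₀ ![0, 1]
  obtain ⟨hr, L, hL0, hL⟩ := summable_and_exists_tendsto_snd_ne_zero hR hψ hψn₀ hn₀
  have hψL (n : ℕ) : (L⁻¹ • ψ) (n + 1) = (!![1, c; 0, 1] + R n) *ᵥ (L⁻¹ • ψ) n := by
    simp only [Pi.smul_apply, hψ n, mulVec_smul]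
  refine ⟨L⁻¹ • ψ, hψL, tendsto_inv_mul_norm_sub_of_tendsto hψL ?_ ?_⟩
  · simp only [Pi.smul_apply, mulVec_smul]
    simpa using (tendsto_zero_iff_norm_tendsto_zero.2 hr.tendsto_atTop_zero).const_smul L⁻¹
  · simpa [inv_mul_cancel₀ hL0] using hL.const_mul L⁻¹

theorem stmt12 (c : ℝ) (hc : c ≠ 0)
    (R : ℕ → Matrix (Fin 2) (Fin 2) ℝ)
    (hR : Summable fun n : ℕ => ((n : ℝ) + 1) * ‖R n‖)
    (hdet : ∀ n : ℕ, (!![(1 : ℝ), c; 0, 1] + R n).det ≠ 0) :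
    ∃ ψ : ℕ → Fin 2 → ℝ,
      (∀ n : ℕ, ψ (n + 1) = (!![(1 : ℝ), c; 0, 1] + R n).mulVec (ψ n)) ∧
      Filter.Tendsto (fun n : ℕ => (1 / (n : ℝ)) * ‖ψ n - ![c * n, 1]‖)
        Filter.atTop (nhds 0) :=
  stmt12_general c R hR hdet
end

section
/- Let d ≥ 1, α, θ ∈ ℝ^d, v : ℝ^d → ℝ, E ∈ ℝ, a ∈ {1, −1}, c ∈ ℝ, and let B : ℝ^d → M₂(ℝ) satisfy det B(x) = 1, sup_x ‖B(x)‖ < ∞, and B(x+α)⁻¹ · S_E(x) · B(x) = [[a, c], [0, a]] for every x ∈ ℝ^d. Let g : ℤ → ℝ satisfy Σ_{n∈ℤ} (1+|n|)·|g(n)| < ∞. Then for every ε > 0 there exists ũ : ℤ → ℝ satisfying the perturbed eigenvalue equation ũ(n+1) + ũ(n−1) + (v(θ+nα) + g(n))·ũ(n) = E·ũ(n) for all n ∈ ℤ, such that limsup_{n→+∞} |ũ(n) − aⁿ·(B(θ+nα))₁₁| ≤ ε. -/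
/-
Put `x_n = θ + nα`, `M_n = B(x_n)` and `C = !![a, c; 0, a]`. The conjugacy reads
`S_E(x_n) M_n = M_{n+1} C`, so `Y_n = M_n Cⁿ` satisfies `Y_{n+1} = S_E(x_n) Y_n`: the top row
of `Y_n` consists of two solutions of the unperturbed equation, `φ_n = aⁿ (M_n)₀₀`, bounded, and
`ψ_n`, growing at most linearly in `n` (because `Cⁿ` does), with Wronskian `det Y_n = 1`.

For the perturbed equation we follow Levinson. With the Green function
`G(n, m) = φ_m ψ_n - ψ_m φ_n`, a bounded solution of `u_n = φ_n - ∑_{m > n} G(n, m) g_m u_m`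
(for `n ≥ N`) solves the perturbed equation there. Since `|G(n, m)| ≲ 1 + |m|` for `0 ≤ n < m`,
the right-hand side is a contraction of bounded sequences once `∑_{m > N} (1 + |m|) |g_m|` is
small, and `u_n - φ_n` is bounded by a multiple of that tail, so it tends to `0`. The recursion
then extends `u` backwards to all of `ℤ`.
-/

attribute [local instance] Matrix.normedAddCommGroup

noncomputable section

open Filter Topology

def SchrodingerEqAt (V : ℤ → ℝ) (E : ℝ) (u : ℤ → ℝ) (n : ℤ) : Prop :=
  u (n + 1) + u (n - 1) + V n * u n = E * u n

section Transfer

variable {V : ℤ → ℝ} {E : ℝ} {Y : ℤ → Matrix (Fin 2) (Fin 2) ℝ}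

theorem transfer_zero_apply (hY : ∀ n, Y (n + 1) = !![E - V n, -1; 1, 0] * Y n) (n : ℤ)
    (j : Fin 2) : Y (n + 1) 0 j = (E - V n) * Y n 0 j - Y n 1 j := by
  simp [hY n, Matrix.mul_apply, sub_eq_add_neg]

theorem transfer_one_apply (hY : ∀ n, Y (n + 1) = !![E - V n, -1; 1, 0] * Y n) (n : ℤ)
    (j : Fin 2) : Y (n + 1) 1 j = Y n 0 j := by
  simp [hY n, Matrix.mul_apply]

theorem schrodingerEqAt_of_transfer (hY : ∀ n, Y (n + 1) = !![E - V n, -1; 1, 0] * Y n)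
    (j : Fin 2) (n : ℤ) : SchrodingerEqAt V E (fun n => Y n 0 j) n := by
  have hprev := transfer_one_apply hY (n - 1) j
  rw [sub_add_cancel] at hprev
  change Y (n + 1) 0 j + Y (n - 1) 0 j + V n * Y n 0 j = E * Y n 0 j
  rw [transfer_zero_apply hY, ← hprev]
  ring

theorem wronskian_eq_det_of_transfer (hY : ∀ n, Y (n + 1) = !![E - V n, -1; 1, 0] * Y n)
    (n : ℤ) : Y (n + 1) 0 0 * Y n 0 1 - Y n 0 0 * Y (n + 1) 0 1 = (Y (n + 1)).det := by
  rw [Matrix.det_fin_two, transfer_one_apply hY, transfer_one_apply hY]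
  ring

end Transfer

/-- `!![a, c; 0, a] ^ n`, written out so that it makes sense for `n : ℤ`. -/
def jordanPow (a c : ℝ) (n : ℤ) : Matrix (Fin 2) (Fin 2) ℝ :=
  !![a ^ n, n * c * a ^ (n - 1); 0, a ^ n]

theorem jordanPow_succ {a : ℝ} (ha : a ≠ 0) (c : ℝ) (n : ℤ) :
    jordanPow a c (n + 1) = !![a, c; 0, a] * jordanPow a c n := by
  have h : a ^ n = a * a ^ (n - 1) := by rw [← zpow_one_add₀ ha, add_sub_cancel]
  rw [jordanPow, jordanPow, Matrix.mul_fin_two, add_sub_cancel_right, zpow_add_one₀ ha]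
  simp only [mul_zero, zero_mul, add_zero, zero_add, Int.cast_add, Int.cast_one, mul_comm _ a]
  congr 4
  linear_combination (n * c) * h

theorem det_jordanPow {a : ℝ} (ha : |a| = 1) (c : ℝ) (n : ℤ) : (jordanPow a c n).det = 1 := by
  rw [jordanPow, Matrix.det_fin_two_of, ← mul_zpow, mul_zero, sub_zero, ← abs_mul_abs_self, ha,
    one_mul, one_zpow]

theorem mul_jordanPow_zero_zero (M : Matrix (Fin 2) (Fin 2) ℝ) (a c : ℝ) (n : ℤ) :
    (M * jordanPow a c n) 0 0 = a ^ n * M 0 0 := by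
  simp [jordanPow, Matrix.mul_apply, mul_comm]

theorem mul_jordanPow_zero_one (M : Matrix (Fin 2) (Fin 2) ℝ) (a c : ℝ) (n : ℤ) :
    (M * jordanPow a c n) 0 1 = M 0 0 * (n * c * a ^ (n - 1)) + M 0 1 * a ^ n := by
  simp [jordanPow, Matrix.mul_apply]

def tailSum (h : ℤ → ℝ) (n : ℤ) : ℝ := ∑' k : ℕ, h (n + 1 + k)

theorem Summable.comp_int_add_nat {h : ℤ → ℝ} (hh : Summable h) (n : ℤ) :
    Summable fun k : ℕ => h (n + 1 + k) :=
  hh.comp_injective fun i j hij => by simpa using hij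

theorem tailSum_eq_add {h : ℤ → ℝ} {n : ℤ} (hh : Summable fun k : ℕ => h (n + 1 + k)) :
    tailSum h n = h (n + 1) + tailSum h (n + 1) := by
  rw [tailSum, hh.tsum_eq_zero_add, tailSum, Nat.cast_zero, add_zero]
  congr 2 with k
  push_cast
  ring_nf

theorem tendsto_tailSum (h : ℤ → ℝ) : Tendsto (tailSum h) atTop (𝓝 0) := by
  have hnat : Tendsto (fun i : ℕ => ∑' k : ℕ, h (k + i : ℕ)) atTop (𝓝 0) :=
    tendsto_sum_nat_add fun k : ℕ => h k
  have hshift : Tendsto (fun n : ℤ => n.toNat + 1) atTop atTop :=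
    tendsto_atTop_atTop.2 fun b => ⟨b, fun n hn => by omega⟩
  refine (hnat.comp hshift).congr' ?_
  filter_upwards [eventually_ge_atTop 0] with n hn
  simp only [Function.comp_apply, tailSum]
  congr 1 with k
  congr 1
  push_cast [Int.toNat_of_nonneg hn]
  ring

theorem summable_tail_of_abs_le {h w : ℤ → ℝ} {n : ℤ} (hw : Summable w)
    (hle : ∀ m, n < m → |h m| ≤ w m) :
    Summable fun k : ℕ => h (n + 1 + k) :=
  Summable.of_norm_bounded (hw.comp_int_add_nat n) fun k => hle _ (by omega)

theorem abs_tailSum_le {h w : ℤ → ℝ} {n : ℤ} (hw : Summable w)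
    (hle : ∀ m, n < m → |h m| ≤ w m) :
    |tailSum h n| ≤ tailSum w n := by
  rw [← Real.norm_eq_abs]
  exact tsum_of_norm_bounded (hw.comp_int_add_nat n).hasSum fun k => hle _ (by omega)

def greenFn (φ ψ : ℤ → ℝ) (n m : ℤ) : ℝ := φ m * ψ n - ψ m * φ n

section Green

variable {V : ℤ → ℝ} {E C : ℝ} {φ ψ : ℤ → ℝ}

theorem schrodingerEqAt_greenFn {n : ℤ} (hφ : SchrodingerEqAt V E φ n)
    (hψ : SchrodingerEqAt V E ψ n) (m : ℤ) : SchrodingerEqAt V E (greenFn φ ψ · m) n := by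
  unfold SchrodingerEqAt greenFn at *
  linear_combination φ m * hψ - ψ m * hφ

theorem greenFn_self (m : ℤ) : greenFn φ ψ m m = 0 := by
  rw [greenFn]; ring

theorem greenFn_pred_self {m : ℤ} (hW : φ m * ψ (m - 1) - φ (m - 1) * ψ m = 1) :
    greenFn φ ψ (m - 1) m = 1 := by
  rw [greenFn]; linear_combination hW

theorem abs_greenFn_le (hφ : ∀ n, |φ n| ≤ C) (hψ : ∀ n, |ψ n| ≤ C * (1 + |(n : ℝ)|))
    (p m : ℤ) :
    |greenFn φ ψ p m| ≤ C ^ 2 * ((1 + |(p : ℝ)|) + (1 + |(m : ℝ)|)) := by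
  have hC : 0 ≤ C := (abs_nonneg _).trans (hφ 0)
  calc |greenFn φ ψ p m| ≤ |φ m| * |ψ p| + |ψ m| * |φ p| := by
        rw [greenFn, ← abs_mul, ← abs_mul]; exact abs_sub _ _
    _ ≤ C * (C * (1 + |(p : ℝ)|)) + C * (1 + |(m : ℝ)|) * C := by
        gcongr
        exacts [hφ m, hψ p, hψ m, hφ p]
    _ = C ^ 2 * ((1 + |(p : ℝ)|) + (1 + |(m : ℝ)|)) := by ring

end Green

def weight (g : ℤ → ℝ) (m : ℤ) : ℝ := (1 + |(m : ℝ)|) * |g m|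

def greenTail (φ ψ g f : ℤ → ℝ) (n : ℤ) : ℝ :=
  tailSum (fun m => greenFn φ ψ n m * g m * f m) n

section GreenTail

variable {V : ℤ → ℝ} {E C F : ℝ} {φ ψ g f : ℤ → ℝ}

theorem abs_mul_mul_le_weight {G K : ℝ} {m : ℤ} (hG : |G| ≤ K * (1 + |(m : ℝ)|))
    (hf : |f m| ≤ F) :
    |G * g m * f m| ≤ K * F * weight g m := by
  rw [abs_mul, abs_mul, weight]
  have := (abs_nonneg G).trans hG
  calc |G| * |g m| * |f m| ≤ K * (1 + |(m : ℝ)|) * |g m| * F := by gcongr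
    _ = K * F * ((1 + |(m : ℝ)|) * |g m|) := by ring

theorem summable_greenFn_mul (hφ : ∀ n, |φ n| ≤ C) (hψ : ∀ n, |ψ n| ≤ C * (1 + |(n : ℝ)|))
    (hg : Summable (weight g)) (hf : ∀ m, |f m| ≤ F) (p n : ℤ) :
    Summable fun k : ℕ => greenFn φ ψ p (n + 1 + k) * g (n + 1 + k) * f (n + 1 + k) := by
  refine summable_tail_of_abs_le (h := fun m => greenFn φ ψ p m * g m * f m)
    (hg.mul_left (C ^ 2 * (2 + |(p : ℝ)|) * F)) fun m _ =>
    abs_mul_mul_le_weight ((abs_greenFn_le hφ hψ p m).trans ?_) (hf m)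
  nlinarith [mul_nonneg (sq_nonneg C) (mul_nonneg (abs_nonneg (p : ℝ)) (abs_nonneg (m : ℝ))),
    mul_nonneg (sq_nonneg C) (abs_nonneg (m : ℝ))]

theorem abs_greenTail_le (hφ : ∀ n, |φ n| ≤ C) (hψ : ∀ n, |ψ n| ≤ C * (1 + |(n : ℝ)|))
    (hg : Summable (weight g)) (hf : ∀ m, |f m| ≤ F) {n : ℤ} (hn : 0 ≤ n) :
    |greenTail φ ψ g f n| ≤ 2 * C ^ 2 * F * tailSum (weight g) n := by
  rw [greenTail, tailSum, tailSum, ← tsum_mul_left]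
  refine abs_tailSum_le (h := fun m => greenFn φ ψ n m * g m * f m)
    (hg.mul_left (2 * C ^ 2 * F)) fun m hm =>
    abs_mul_mul_le_weight ((abs_greenFn_le hφ hψ n m).trans ?_) (hf m)
  have : |(n : ℝ)| ≤ |(m : ℝ)| := by
    rw [abs_of_nonneg (Int.cast_nonneg hn), abs_of_nonneg (Int.cast_nonneg (hn.trans hm.le))]
    exact_mod_cast hm.le
  nlinarith [mul_nonneg (sq_nonneg C) (sub_nonneg.2 this)]

theorem greenTail_sub {F' : ℝ} {f' : ℤ → ℝ} (hφ : ∀ n, |φ n| ≤ C)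
    (hψ : ∀ n, |ψ n| ≤ C * (1 + |(n : ℝ)|)) (hg : Summable (weight g))
    (hf : ∀ m, |f m| ≤ F) (hf' : ∀ m, |f' m| ≤ F') (n : ℤ) :
    greenTail φ ψ g f n - greenTail φ ψ g f' n = greenTail φ ψ g (f - f') n := by
  rw [greenTail, greenTail, greenTail, tailSum, tailSum, tailSum,
    ← (summable_greenFn_mul hφ hψ hg hf n n).tsum_sub (summable_greenFn_mul hφ hψ hg hf' n n)]
  congr with k
  simp only [Pi.sub_apply]
  ring

theorem greenTail_inhomogeneous_eq {n : ℤ} (hφ : SchrodingerEqAt V E φ n)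
    (hψ : SchrodingerEqAt V E ψ n) (hW : φ n * ψ (n - 1) - φ (n - 1) * ψ n = 1)
    (hs : ∀ p q,
      Summable fun k : ℕ => greenFn φ ψ p (q + 1 + k) * g (q + 1 + k) * f (q + 1 + k)) :
    greenTail φ ψ g f (n + 1) + greenTail φ ψ g f (n - 1) + V n * greenTail φ ψ g f n =
      E * greenTail φ ψ g f n + g n * f n := by
  have hnext : greenTail φ ψ g f (n + 1) =
      tailSum (fun m => greenFn φ ψ (n + 1) m * g m * f m) n := by
    rw [tailSum_eq_add (h := fun m => greenFn φ ψ (n + 1) m * g m * f m) (hs (n + 1) n),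
      greenFn_self, zero_mul, zero_mul, zero_add, greenTail]
  have hprev : greenTail φ ψ g f (n - 1) =
      g n * f n + tailSum (fun m => greenFn φ ψ (n - 1) m * g m * f m) n := by
    have := tailSum_eq_add (h := fun m => greenFn φ ψ (n - 1) m * g m * f m) (n := n - 1)
      (by simpa only [sub_add_cancel] using hs (n - 1) (n - 1))
    simp only [sub_add_cancel, greenFn_pred_self hW, one_mul] at this
    rw [greenTail, this]
  have hcomb : tailSum (fun m => greenFn φ ψ (n + 1) m * g m * f m) n
      + tailSum (fun m => greenFn φ ψ (n - 1) m * g m * f m) n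
      + (V n - E) * tailSum (fun m => greenFn φ ψ n m * g m * f m) n = 0 := by
    rw [tailSum, tailSum, tailSum, ← tsum_mul_left, ← (hs _ n).tsum_add (hs _ n),
      ← ((hs _ n).add (hs _ n)).tsum_add ((hs n n).mul_left _)]
    refine (tsum_congr fun k => ?_).trans tsum_zero
    have := schrodingerEqAt_greenFn hφ hψ (n + 1 + k)
    unfold SchrodingerEqAt at this
    linear_combination g (n + 1 + k) * f (n + 1 + k) * this
  rw [hnext, hprev, greenTail]
  linear_combination hcomb

end GreenTail

open BoundedContinuousFunction in
theorem exists_bounded_eq_sub {φ : ℤ → ℝ} {C : ℝ} {N : ℤ} (hφ : ∀ n, |φ n| ≤ C)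
    (S : (ℤ → ℝ) → ℤ → ℝ) (hS : ∀ f F, (∀ m, |f m| ≤ F) → ∀ n, N ≤ n → |S f n| ≤ F / 2)
    (hS_sub : ∀ f f' F F', (∀ m, |f m| ≤ F) → (∀ m, |f' m| ≤ F') →
      ∀ n, N ≤ n → S f n - S f' n = S (f - f') n) :
    ∃ F : ℝ, ∃ u : ℤ → ℝ, (∀ m, |u m| ≤ F) ∧ ∀ n, N ≤ n → u n = φ n - S u n := by
  have hnorm : ∀ (f : ℤ →ᵇ ℝ) m, |f m| ≤ ‖f‖ := fun f m => f.norm_coe_le_norm m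
  let T : (ℤ →ᵇ ℝ) → ℤ → ℝ := fun f n => if N ≤ n then φ n - S f n else φ n
  have hT : ∀ f n, ‖T f n‖ ≤ C + ‖f‖ := by
    intro f n
    rw [Real.norm_eq_abs]
    by_cases hn : N ≤ n
    · simp only [T, if_pos hn]
      linarith [abs_sub (φ n) (S f n), hφ n, hS f _ (hnorm f) n hn, norm_nonneg f]
    · simp only [T, if_neg hn]
      linarith [hφ n, norm_nonneg f]
  let Φ : (ℤ →ᵇ ℝ) → (ℤ →ᵇ ℝ) := fun f =>
    ofNormedAddCommGroup (T f) continuous_of_discreteTopology _ (hT f)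
  have hΦ : ContractingWith (1 / 2) Φ := by
    refine ⟨by norm_num, LipschitzWith.of_dist_le_mul fun f f' => ?_⟩
    refine (dist_le (by positivity)).2 fun n => ?_
    simp only [Φ, coe_ofNormedAddCommGroup, T, Real.dist_eq]
    split_ifs with hn
    · rw [sub_sub_sub_cancel_left, hS_sub _ _ _ _ (hnorm f') (hnorm f) n hn]
      refine (hS _ _ (fun m => ?_) n hn).trans_eq (by norm_num; ring)
      rw [Pi.sub_apply, ← Real.dist_eq, dist_comm]
      exact dist_coe_le_dist m
    · simp only [sub_self, abs_zero]
      positivity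
  refine ⟨_, _, hnorm (hΦ.fixedPoint Φ), fun n hn => ?_⟩
  have := congrFun (congrArg (⇑) hΦ.fixedPoint_isFixedPt) n
  simp only [Φ, coe_ofNormedAddCommGroup, T, if_pos hn] at this
  exact this.symm

theorem exists_eq_sub_greenTail {C : ℝ} {φ ψ g : ℤ → ℝ} (hφ : ∀ n, |φ n| ≤ C)
    (hψ : ∀ n, |ψ n| ≤ C * (1 + |(n : ℝ)|)) (hg : Summable (weight g)) :
    ∃ N : ℤ, 0 ≤ N ∧ ∃ F : ℝ, ∃ u : ℤ → ℝ,
      (∀ m, |u m| ≤ F) ∧ ∀ n, N ≤ n → u n = φ n - greenTail φ ψ g u n := by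
  have hsmall : Tendsto (fun n => 2 * C ^ 2 * tailSum (weight g) n) atTop (𝓝 0) := by
    simpa using (tendsto_tailSum (weight g)).const_mul (2 * C ^ 2)
  obtain ⟨N, hN⟩ := eventually_atTop.1
    ((hsmall.eventually (gt_mem_nhds one_half_pos)).and (eventually_ge_atTop 0))
  refine ⟨N, (hN N le_rfl).2, exists_bounded_eq_sub hφ (greenTail φ ψ g) ?_
    fun f f' F F' hf hf' n _ => greenTail_sub hφ hψ hg hf hf' n⟩
  intro f F hf n hn
  have hF : 0 ≤ F := (abs_nonneg _).trans (hf 0)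
  calc |greenTail φ ψ g f n| ≤ 2 * C ^ 2 * F * tailSum (weight g) n :=
        abs_greenTail_le hφ hψ hg hf (hN n hn).2
    _ = F * (2 * C ^ 2 * tailSum (weight g) n) := by ring
    _ ≤ F * (1 / 2) := by gcongr; exact (hN n hn).1.le
    _ = F / 2 := by ring

/-- The value at `N + 1 - k` of the solution with values `x₀, x₁` at `N + 1, N`. -/
def backwardSol (V : ℤ → ℝ) (E : ℝ) (N : ℤ) (x₀ x₁ : ℝ) : ℕ → ℝ
  | 0 => x₀
  | 1 => x₁
  | k + 2 => (E - V (N - k)) * backwardSol V E N x₀ x₁ (k + 1) - backwardSol V E N x₀ x₁ k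

theorem exists_extend_schrodingerEqAt {V u : ℤ → ℝ} {E : ℝ} {N : ℤ}
    (hu : ∀ n, N < n → SchrodingerEqAt V E u n) :
    ∃ u' : ℤ → ℝ, (∀ n, SchrodingerEqAt V E u' n) ∧ ∀ n, N ≤ n → u' n = u n := by
  let q := backwardSol V E N (u (N + 1)) (u N)
  let u' : ℤ → ℝ := fun n => if N ≤ n then u n else q (N + 1 - n).toNat
  have hq : ∀ n, n ≤ N + 1 → u' n = q (N + 1 - n).toNat := by
    intro n hn
    by_cases h : N ≤ n
    · obtain h | h : n = N ∨ n = N + 1 := by omega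
      all_goals simp [u', q, backwardSol, h]
    · simp [u', h]
  refine ⟨u', fun n => ?_, fun n hn => if_pos hn⟩
  by_cases hn : N < n
  · have h := hu n hn
    unfold SchrodingerEqAt at h ⊢
    simpa only [u', if_pos (show N ≤ n + 1 by omega), if_pos (show N ≤ n - 1 by omega),
      if_pos hn.le] using h
  · obtain ⟨k, hk⟩ : ∃ k : ℕ, N - n = k := ⟨(N - n).toNat, by omega⟩
    unfold SchrodingerEqAt
    rw [hq n (by omega), hq (n + 1) (by omega), hq (n - 1) (by omega),
      show (N + 1 - n).toNat = k + 1 by omega, show (N + 1 - (n + 1)).toNat = k by omega,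
      show (N + 1 - (n - 1)).toNat = k + 2 by omega]
    simp only [q, backwardSol, show N - k = n by omega]
    ring

theorem exists_schrodingerEqAt_tendsto_sub {V φ ψ g : ℤ → ℝ} {E C : ℝ}
    (hφ : ∀ n, SchrodingerEqAt V E φ n) (hψ : ∀ n, SchrodingerEqAt V E ψ n)
    (hW : ∀ n, φ (n + 1) * ψ n - φ n * ψ (n + 1) = 1)
    (hφC : ∀ n, |φ n| ≤ C) (hψC : ∀ n, |ψ n| ≤ C * (1 + |(n : ℝ)|))
    (hg : Summable (weight g)) :
    ∃ u : ℤ → ℝ, (∀ n, SchrodingerEqAt (V + g) E u n) ∧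
      Tendsto (fun n => u n - φ n) atTop (𝓝 0) := by
  obtain ⟨N, hN, F, u, hu, hfix⟩ := exists_eq_sub_greenTail hφC hψC hg
  have hsol : ∀ n, N < n → SchrodingerEqAt (V + g) E u n := by
    intro n hn
    have hW' : φ n * ψ (n - 1) - φ (n - 1) * ψ n = 1 := by
      simpa only [sub_add_cancel] using hW (n - 1)
    have hG := greenTail_inhomogeneous_eq (hφ n) (hψ n) hW'
      (summable_greenFn_mul hφC hψC hg hu)
    have hφn := hφ n
    unfold SchrodingerEqAt at hφn ⊢
    rw [hfix n hn.le, hfix (n + 1) (by omega), hfix (n - 1) (by omega), Pi.add_apply]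
    linear_combination hφn - hG - g n * hfix n hn.le
  obtain ⟨u', hu', hu'u⟩ := exists_extend_schrodingerEqAt hsol
  have hbound : Tendsto (fun n => 2 * C ^ 2 * F * tailSum (weight g) n) atTop (𝓝 0) := by
    simpa using (tendsto_tailSum (weight g)).const_mul (2 * C ^ 2 * F)
  refine ⟨u', hu', squeeze_zero_norm' ?_ hbound⟩
  filter_upwards [eventually_ge_atTop N] with n hn
  rw [hu'u n hn, hfix n hn, sub_sub_cancel_left, norm_neg, Real.norm_eq_abs]
  exact abs_greenTail_le hφC hψC hg hu (hN.trans hn)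

theorem exists_schrodingerEqAt_tendsto_of_conj {V g : ℤ → ℝ} {E a c Cb : ℝ}
    {M : ℤ → Matrix (Fin 2) (Fin 2) ℝ} (ha : |a| = 1) (hdet : ∀ n, (M n).det = 1)
    (hbd : ∀ n i j, |M n i j| ≤ Cb)
    (hM : ∀ n, !![E - V n, -1; 1, 0] * M n = M (n + 1) * !![a, c; 0, a])
    (hg : Summable (weight g)) :
    ∃ u : ℤ → ℝ, (∀ n, SchrodingerEqAt (V + g) E u n) ∧
      Tendsto (fun n => u n - a ^ n * M n 0 0) atTop (𝓝 0) := by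
  have ha0 : a ≠ 0 := by rintro rfl; simp at ha
  have hCb : 0 ≤ Cb := (abs_nonneg _).trans (hbd 0 0 0)
  have hY : ∀ n, M (n + 1) * jordanPow a c (n + 1) =
      !![E - V n, -1; 1, 0] * (M n * jordanPow a c n) := fun n => by
    rw [jordanPow_succ ha0, ← mul_assoc, ← hM, mul_assoc]
  have hφC : ∀ n, |(M n * jordanPow a c n) 0 0| ≤ Cb * (1 + |c|) := fun n => by
    rw [mul_jordanPow_zero_zero, abs_mul, abs_zpow, ha, one_zpow, one_mul]
    nlinarith [hbd n 0 0, abs_nonneg c]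
  have hψC : ∀ n, |(M n * jordanPow a c n) 0 1| ≤ Cb * (1 + |c|) * (1 + |(n : ℝ)|) :=
      fun n => by
    rw [mul_jordanPow_zero_one]
    refine (abs_add_le _ _).trans ?_
    simp only [abs_mul, abs_zpow, ha, one_zpow, mul_one]
    nlinarith [hbd n 0 0, hbd n 0 1, abs_nonneg c, abs_nonneg (n : ℝ), abs_nonneg (M n 0 0),
      mul_nonneg (abs_nonneg (n : ℝ)) (abs_nonneg c)]
  have hW : ∀ n, (M (n + 1) * jordanPow a c (n + 1)) 0 0 * (M n * jordanPow a c n) 0 1 -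
      (M n * jordanPow a c n) 0 0 * (M (n + 1) * jordanPow a c (n + 1)) 0 1 = 1 := fun n =>
    (wronskian_eq_det_of_transfer (Y := fun n => M n * jordanPow a c n) hY n).trans
      (by rw [Matrix.det_mul, hdet, det_jordanPow ha, one_mul])
  simpa only [mul_jordanPow_zero_zero] using exists_schrodingerEqAt_tendsto_sub
    (schrodingerEqAt_of_transfer hY 0) (schrodingerEqAt_of_transfer hY 1) hW hφC hψC hg

theorem mul_eq_mul_of_inv_mul_mul_eq {ι R : Type*} [Fintype ι] [DecidableEq ι] [CommRing R]
    {A S B C : Matrix ι ι R} (hA : IsUnit A.det) (h : A⁻¹ * S * B = C) : S * B = A * C := by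
  rw [← h, mul_assoc, Matrix.mul_nonsing_inv_cancel_left _ _ hA]

theorem stmt15_general (d : ℕ) (α θ : Fin d → ℝ) (v : (Fin d → ℝ) → ℝ) (E : ℝ)
    (a c : ℝ) (ha : a = 1 ∨ a = -1)
    (B : (Fin d → ℝ) → Matrix (Fin 2) (Fin 2) ℝ)
    (hdetB : ∀ x, (B x).det = 1)
    (hBbd : ∃ Cb : ℝ, ∀ x, ‖B x‖ ≤ Cb)
    (hconj : ∀ x : Fin d → ℝ,
      (B (x + α))⁻¹ * !![E - v x, -1; 1, 0] * B x = !![a, c; 0, a])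
    (g : ℤ → ℝ) (hg : Summable fun n : ℤ => (1 + |(n : ℝ)|) * |g n|)
    (ε : ℝ) (hε : 0 < ε) :
    ∃ u : ℤ → ℝ,
      (∀ n : ℤ, u (n + 1) + u (n - 1) + (v (θ + (n : ℝ) • α) + g n) * u n = E * u n) ∧
      Filter.limsup (fun n : ℤ => |u n - a ^ n * B (θ + (n : ℝ) • α) 0 0|)
        Filter.atTop ≤ ε := by
  obtain ⟨Cb, hCb⟩ := hBbd
  have hM (n : ℤ) : !![E - v (θ + (n : ℝ) • α), -1; 1, 0] * B (θ + (n : ℝ) • α) =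
      B (θ + ((n + 1 : ℤ) : ℝ) • α) * !![a, c; 0, a] := by
    have hshift : θ + (n : ℝ) • α + α = θ + ((n + 1 : ℤ) : ℝ) • α := by
      push_cast; rw [add_smul, one_smul, add_assoc]
    refine mul_eq_mul_of_inv_mul_mul_eq (by rw [hdetB]; exact isUnit_one) ?_
    rw [← hshift]
    exact hconj _
  obtain ⟨u, hu, hlim⟩ := exists_schrodingerEqAt_tendsto_of_conj ((abs_eq zero_le_one).2 ha)
    (fun n => hdetB _) (fun n i j => (Matrix.norm_entry_le_entrywise_sup_norm _).trans (hCb _))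
    hM hg
  have habs : Tendsto (fun n : ℤ => |u n - a ^ n * B (θ + (n : ℝ) • α) 0 0|) atTop (𝓝 0) := by
    simpa using hlim.abs
  exact ⟨u, hu, habs.limsup_eq.trans_le hε.le⟩

theorem stmt15 (d : ℕ) (hd : 1 ≤ d) (α θ : Fin d → ℝ) (v : (Fin d → ℝ) → ℝ) (E : ℝ)
    (a c : ℝ) (ha : a = 1 ∨ a = -1)
    (B : (Fin d → ℝ) → Matrix (Fin 2) (Fin 2) ℝ)
    (hdetB : ∀ x, (B x).det = 1)
    (hBbd : ∃ Cb : ℝ, ∀ x, ‖B x‖ ≤ Cb)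
    (hconj : ∀ x : Fin d → ℝ,
      (B (x + α))⁻¹ * !![E - v x, -1; 1, 0] * B x = !![a, c; 0, a])
    (g : ℤ → ℝ) (hg : Summable fun n : ℤ => (1 + |(n : ℝ)|) * |g n|)
    (ε : ℝ) (hε : 0 < ε) :
    ∃ u : ℤ → ℝ,
      (∀ n : ℤ, u (n + 1) + u (n - 1) + (v (θ + (n : ℝ) • α) + g n) * u n = E * u n) ∧
      Filter.limsup (fun n : ℤ => |u n - a ^ n * B (θ + (n : ℝ) • α) 0 0|)
        Filter.atTop ≤ ε :=
  stmt15_general d α θ v E a c ha B hdetB hBbd hconj g hg ε hε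
end
end

section
/- Let d ≥ 1, α, θ ∈ ℝ^d, v : ℝ^d → ℝ, E ∈ ℝ, λ ∈ ℝ with |λ| > 1, μ ∈ ℝ, and let B : ℝ^d → M₂(ℝ) satisfy det B(x) = 1, sup_x ‖B(x)‖ < ∞, and B(x+α)⁻¹ · S_E(x) · B(x) = [[λ, μ], [0, λ⁻¹]] for every x ∈ ℝ^d. Let g : ℤ → ℝ satisfy Σ_{n∈ℤ} |g(n)| < ∞. Then for every ε > 0 there exists ũ : ℤ → ℝ satisfying the perturbed eigenvalue equation ũ(n+1) + ũ(n−1) + (v(θ+nα) + g(n))·ũ(n) = E·ũ(n) for all n ∈ ℤ, such that limsup_{n→+∞} |λ^{−n}·ũ(n) − (B(θ+nα))₁₁| ≤ ε. -/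
attribute [local instance] Matrix.normedAddCommGroup

noncomputable section

/-
Shearing `B` by `T = !![1, μ / (λ⁻¹ - λ); 0, 1]` diagonalises the conjugacy: `P n = B (θ + nα) * T`
satisfies `S_E (θ + nα) * P n = P (n + 1) * diag(λ, λ⁻¹)`. For a solution `W` of the perturbed
vector recursion, `Z n = λ⁻ⁿ (P n)⁻¹ W n` then obeys `Z (n + 1) = diag(1, λ⁻²) Z n + R n (Z n)`
with `‖R n w‖ ≤ K² |g n| ‖w‖`, where `K` bounds `P n` and `(P n)⁻¹`. Since `diag(1, λ⁻²)` is a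
contraction fixing `e₀`, a discrete Grönwall estimate keeps `Z n` within
`exp (K² ∑_{k ≥ N} |g k|) - 1` of `e₀` once `Z N = e₀`. So one imposes `Z N = e₀` at a time `N`
beyond which `g` has a small `ℓ¹`-tail, runs the invertible transfer matrices in both directions,
and uses `λ⁻ⁿ u n - B₁₁ = (P n (Z n - e₀))₀`.
-/

open Filter Topology Finset
open scoped Matrix

theorem Equiv.Perm.exists_seq_succ_eq_apply {X : Type*} (F : ℤ → Equiv.Perm X) (N : ℤ)
    (x : X) :
    ∃ W : ℤ → X, W N = x ∧ ∀ n, W (n + 1) = F n (W n) := by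
  -- The integer powers of the time-shift `Φ` run the recursion forwards and backwards.
  let Φ : Equiv.Perm (ℤ × X) :=
    { toFun := fun p => (p.1 + 1, F p.1 p.2)
      invFun := fun p => (p.1 - 1, (F (p.1 - 1)).symm p.2)
      left_inv := fun p => by simp
      right_inv := fun p => by simp }
  have hfst : ∀ (k : ℤ) (p : ℤ × X), ((Φ ^ k) p).1 = p.1 + k := by
    intro k
    induction k using Int.induction_on with
    | zero => simp
    | succ k ih =>
      intro p
      rw [_root_.zpow_add_one, Equiv.Perm.mul_apply, ih]
      simp [Φ]; ring
    | pred k ih =>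
      intro p
      rw [_root_.zpow_sub_one, Equiv.Perm.mul_apply, ih]
      simp [Φ, Equiv.Perm.inv_def]; ring
  refine ⟨fun n => ((Φ ^ (n - N)) (N, x)).2, by simp, fun n => ?_⟩
  have h := hfst (n - N) (N, x)
  rw [add_sub_cancel] at h
  show ((Φ ^ (n + 1 - N)) (N, x)).2 = _
  rw [show n + 1 - N = 1 + (n - N) by ring, zpow_one_add, Equiv.Perm.mul_apply]
  change F ((Φ ^ (n - N)) (N, x)).1 _ = _
  rw [h]

theorem exists_transfer_orbit (c : ℤ → ℝ) (N : ℤ) (w : Fin 2 → ℝ) :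
    ∃ W : ℤ → Fin 2 → ℝ, W N = w ∧ ∀ n, W (n + 1) = !![c n, -1; 1, 0] *ᵥ W n := by
  let S : ℤ → Matrix.SpecialLinearGroup (Fin 2) ℝ :=
    fun n => ⟨!![c n, -1; 1, 0], by simp [Matrix.det_fin_two]⟩
  obtain ⟨W, hWN, hW⟩ := Equiv.Perm.exists_seq_succ_eq_apply
    (fun n => (Matrix.SpecialLinearGroup.toLin' (S n)).toEquiv) N w
  exact ⟨W, hWN, fun n => hW n⟩

theorem transfer_orbit_apply_zero {c : ℤ → ℝ} {W : ℤ → Fin 2 → ℝ}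
    (hW : ∀ n, W (n + 1) = !![c n, -1; 1, 0] *ᵥ W n) (n : ℤ) :
    W (n + 1) 0 + W (n - 1) 0 = c n * W n 0 := by
  have h0 := congrFun (hW n) 0
  have h1 := congrFun (hW (n - 1)) 1
  simp [Matrix.mulVec, dotProduct, Fin.sum_univ_two] at h0 h1
  rw [h0, ← h1]
  ring

theorem norm_sub_le_of_perturbed_contraction {E : Type*} [SeminormedAddCommGroup E]
    (D : E →+ E) (hD : ∀ w, ‖D w‖ ≤ ‖w‖) (e : E) (hDe : D e = e)
    (R : ℕ → E → E) (r : ℕ → ℝ) (hr : ∀ m, 0 ≤ r m) (hR : ∀ m w, ‖R m w‖ ≤ r m * ‖w‖)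
    (Z : ℕ → E) (h0 : Z 0 = e) (hZ : ∀ m, Z (m + 1) = D (Z m) + R m (Z m)) (m : ℕ) :
    ‖Z m - e‖ ≤ (Real.exp (∑ k ∈ range m, r k) - 1) * ‖e‖ := by
  induction m with
  | zero => simp [h0]
  | succ m ih =>
    set S := ∑ k ∈ range m, r k
    have hZm : ‖Z m‖ ≤ Real.exp S * ‖e‖ := by
      calc ‖Z m‖ ≤ ‖Z m - e‖ + ‖e‖ := norm_le_norm_sub_add _ _
        _ ≤ Real.exp S * ‖e‖ := by linarith
    have hsucc : Z (m + 1) - e = D (Z m - e) + R m (Z m) := by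
      rw [hZ, map_sub, hDe]; abel
    calc ‖Z (m + 1) - e‖ ≤ ‖Z m - e‖ + r m * ‖Z m‖ := by
          rw [hsucc]; exact (norm_add_le _ _).trans (add_le_add (hD _) (hR m _))
      _ ≤ (Real.exp S - 1) * ‖e‖ + r m * (Real.exp S * ‖e‖) :=
          add_le_add ih (mul_le_mul_of_nonneg_left hZm (hr m))
      _ = ((1 + r m) * Real.exp S - 1) * ‖e‖ := by ring
      _ ≤ (Real.exp (∑ k ∈ range (m + 1), r k) - 1) * ‖e‖ := by
          gcongr
          rw [sum_range_succ, Real.exp_add, mul_comm]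
          gcongr
          linarith [Real.add_one_le_exp (r m)]

theorem Summable.exists_forall_apply_sum_range_le {f : ℤ → ℝ} (hf : Summable f)
    (h0 : ∀ n, 0 ≤ f n) {φ : ℝ → ℝ} (hφ : ContinuousAt φ 0) (hφ0 : φ 0 = 0)
    (hmono : Monotone φ) {ε : ℝ} (hε : 0 < ε) : ∃ N : ℕ, ∀ m, φ (∑ k ∈ range m, f (N + k)) ≤ ε := by
  have htail : Tendsto (fun N : ℕ => ∑' k : ℕ, f (N + k)) atTop (𝓝 0) := by
    convert tendsto_sum_nat_add (fun k : ℕ => f k) using 2 with N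
    exact tsum_congr fun k => by rw [Nat.cast_add, add_comm]
  have hφtail := (hφ0 ▸ hφ.tendsto).comp htail
  obtain ⟨N, hN⟩ := (hφtail.eventually (ge_mem_nhds hε)).exists
  refine ⟨N, fun m => (hmono ?_).trans hN⟩
  exact Summable.sum_le_tsum _ (fun _ _ => h0 _)
    (hf.comp_injective ((add_right_injective (N : ℤ)).comp Nat.cast_injective))

theorem Matrix.norm_mulVec_le_card_mul {m n α : Type*} [Fintype m] [Fintype n]
    [NonUnitalNormedRing α] (M : Matrix m n α) (z : n → α) :
    ‖M *ᵥ z‖ ≤ Fintype.card n * ‖M‖ * ‖z‖ := by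
  refine (pi_norm_le_iff_of_nonneg (by positivity)).2 fun i => ?_
  calc ‖(M *ᵥ z) i‖ ≤ ∑ j, ‖M i j‖ * ‖z j‖ :=
        (norm_sum_le _ _).trans (sum_le_sum fun j _ => norm_mul_le _ _)
    _ ≤ ∑ _j : n, ‖M‖ * ‖z‖ := sum_le_sum fun j _ =>
        mul_le_mul (norm_entry_le_entrywise_sup_norm M) (norm_le_pi_norm z j) (norm_nonneg _)
          (norm_nonneg _)
    _ = Fintype.card n * ‖M‖ * ‖z‖ := by simp [mul_assoc]

theorem Matrix.norm_inv_le_of_det_eq_one {R : Type*} [NormedCommRing R]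
    (M : Matrix (Fin 2) (Fin 2) R) (h : M.det = 1) : ‖M⁻¹‖ ≤ ‖M‖ := by
  rw [inv_def, h, Ring.inverse_one, one_smul, adjugate_fin_two, norm_le_iff (norm_nonneg _)]
  intro i j
  fin_cases i <;> fin_cases j <;> simp [norm_entry_le_entrywise_sup_norm]

theorem exists_norm_mulVec_le_of_det_eq_one {ι : Type*} (M : ι → Matrix (Fin 2) (Fin 2) ℝ)
    (hdet : ∀ i, (M i).det = 1) (hM : ∃ C, ∀ i, ‖M i‖ ≤ C) (T : Matrix (Fin 2) (Fin 2) ℝ) :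
    ∃ K, 0 ≤ K ∧ ∀ i z, ‖(M i * T) *ᵥ z‖ ≤ K * ‖z‖ ∧ ‖(M i * T)⁻¹ *ᵥ z‖ ≤ K * ‖z‖ := by
  obtain ⟨C, hC⟩ := hM
  have hC' : ∀ i, ‖M i‖ ≤ max C 0 := fun i => (hC i).trans (le_max_left _ _)
  have hinv : ∀ i, ‖(M i)⁻¹‖ ≤ max C 0 :=
    fun i => (Matrix.norm_inv_le_of_det_eq_one _ (hdet i)).trans (hC' i)
  have hmv : ∀ (A : Matrix (Fin 2) (Fin 2) ℝ) z, ‖A *ᵥ z‖ ≤ 2 * ‖A‖ * ‖z‖ := fun A z => by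
    simpa using A.norm_mulVec_le_card_mul z
  set t := max ‖T‖ ‖T⁻¹‖
  refine ⟨4 * max C 0 * t, by positivity, fun i z => ⟨?_, ?_⟩⟩
  · calc ‖(M i * T) *ᵥ z‖ = ‖M i *ᵥ (T *ᵥ z)‖ := by rw [Matrix.mulVec_mulVec]
      _ ≤ 2 * max C 0 * (2 * t * ‖z‖) := (hmv _ _).trans (by
          gcongr
          exacts [hC' i, (hmv _ _).trans (by gcongr; apply le_max_left)])
      _ = _ := by ring
  · calc ‖(M i * T)⁻¹ *ᵥ z‖ = ‖T⁻¹ *ᵥ ((M i)⁻¹ *ᵥ z)‖ := by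
          rw [Matrix.mul_inv_rev, Matrix.mulVec_mulVec]
      _ ≤ 2 * t * (2 * max C 0 * ‖z‖) := (hmv _ _).trans (by
          gcongr
          exacts [le_max_right _ _, (hmv _ _).trans (by gcongr; exact hinv i)])
      _ = _ := by ring

theorem norm_mulVec_fin_two_corner_le (a : ℝ) (z : Fin 2 → ℝ) :
    ‖!![a, 0; 0, 0] *ᵥ z‖ ≤ |a| * ‖z‖ := by
  refine (pi_norm_le_iff_of_nonneg (by positivity)).2 fun i => ?_
  fin_cases i
  · simpa [abs_mul, Matrix.vecHead] using
      mul_le_mul_of_nonneg_left (norm_le_pi_norm z 0) (abs_nonneg a)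
  · simp; positivity

theorem ne_inv_of_one_lt_abs {K : Type*} [Field K] [LinearOrder K] [IsStrictOrderedRing K]
    {a : K} (h : 1 < |a|) : a ≠ a⁻¹ := fun ha => by
  have h0 : a ≠ 0 := by rintro rfl; simp at h; linarith
  have h1 : a * a = 1 := by nth_rw 2 [ha]; exact mul_inv_cancel₀ h0
  nlinarith [abs_mul_abs_self a]

theorem Matrix.triangular_mul_shear_eq_shear_mul_diagonal {K : Type*} [Field K] {a b : K}
    (μ : K) (h : a ≠ b) :
    !![a, μ; 0, b] * !![1, μ / (b - a); 0, 1] = !![1, μ / (b - a); 0, 1] * !![a, 0; 0, b] := by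
  have : b - a ≠ 0 := sub_ne_zero.2 h.symm
  ext i j
  fin_cases i <;> fin_cases j <;> simp [Matrix.mul_apply]
  field_simp
  ring

theorem Matrix.mul_shear_eq_of_inv_mul_mul_eq {K : Type*} [Field K] {a b μ : K}
    {M M' S : Matrix (Fin 2) (Fin 2) K} (hab : a ≠ b) (hM' : IsUnit M'.det)
    (h : M'⁻¹ * S * M = !![a, μ; 0, b]) :
    S * (M * !![1, μ / (b - a); 0, 1]) = M' * !![1, μ / (b - a); 0, 1] * !![a, 0; 0, b] := by
  rw [Matrix.mul_assoc M', ← triangular_mul_shear_eq_shear_mul_diagonal μ hab, ← h,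
    Matrix.mul_assoc, Matrix.mul_assoc, Matrix.mul_nonsing_inv_cancel_left _ _ hM']

theorem norm_mulVec_diag_one_le {c : ℝ} (hc : |c| ≤ 1) (w : Fin 2 → ℝ) :
    ‖!![1, 0; 0, c] *ᵥ w‖ ≤ ‖w‖ := by
  refine (pi_norm_le_iff_of_nonneg (norm_nonneg w)).2 fun i => ?_
  fin_cases i
  · simpa [Matrix.vecHead] using norm_le_pi_norm w 0
  · simpa [Matrix.vecHead, Matrix.vecTail, abs_mul] using
      mul_le_mul hc (norm_le_pi_norm w 1) (norm_nonneg _) zero_le_one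

theorem rescaled_transfer_succ_eq {P A G : ℤ → Matrix (Fin 2) (Fin 2) ℝ} {lam : ℝ}
    {W Z : ℤ → Fin 2 → ℝ} (hlam0 : lam ≠ 0) (hP : ∀ n, IsUnit (P n).det)
    (hAP : ∀ n, A n * P n = P (n + 1) * !![lam, 0; 0, lam⁻¹])
    (hW : ∀ n, W (n + 1) = (A n + G n) *ᵥ W n) (hWZ : ∀ n, W n = lam ^ n • P n *ᵥ Z n)
    (n : ℤ) :
    Z (n + 1) =
      !![1, 0; 0, lam⁻¹ ^ 2] *ᵥ Z n + lam⁻¹ • (P (n + 1))⁻¹ *ᵥ (G n *ᵥ (P n *ᵥ Z n)) := by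
  have hZ : ∀ k, Z k = lam ^ (-k) • (P k)⁻¹ *ᵥ W k := fun k => by
    rw [hWZ, Matrix.mulVec_smul, Matrix.mulVec_mulVec, Matrix.nonsing_inv_mul _ (hP k),
      Matrix.one_mulVec, smul_smul, ← zpow_add₀ hlam0, neg_add_cancel, zpow_zero, one_smul]
  have hΛ : lam⁻¹ • !![lam, 0; 0, lam⁻¹] = !![1, 0; 0, lam⁻¹ ^ 2] := by
    simp [inv_mul_cancel₀ hlam0, sq]
  have hpow : lam ^ (-(n + 1)) * lam ^ n = lam⁻¹ := by
    rw [← zpow_add₀ hlam0, show -(n + 1) + n = -1 by ring, zpow_neg_one]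
  calc Z (n + 1)
      = lam ^ (-(n + 1)) • (P (n + 1))⁻¹ *ᵥ ((A n + G n) *ᵥ (lam ^ n • P n *ᵥ Z n)) := by
        rw [hZ (n + 1), hW, hWZ n]
    _ = lam⁻¹ • ((P (n + 1))⁻¹ *ᵥ ((A n * P n) *ᵥ Z n)) +
          lam⁻¹ • (P (n + 1))⁻¹ *ᵥ (G n *ᵥ (P n *ᵥ Z n)) := by
        rw [Matrix.mulVec_smul, Matrix.mulVec_smul, smul_smul, hpow, Matrix.add_mulVec,
          Matrix.mulVec_add, smul_add, Matrix.mulVec_mulVec (Z n) (A n)]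
    _ = _ := by
        rw [hAP, Matrix.mulVec_mulVec, ← Matrix.mul_assoc, Matrix.nonsing_inv_mul _ (hP _),
          Matrix.one_mul, ← Matrix.smul_mulVec, hΛ]

theorem norm_zpow_smul_sub_le_of_perturbation {P A G : ℤ → Matrix (Fin 2) (Fin 2) ℝ}
    {lam K : ℝ} {γ : ℤ → ℝ} {W : ℤ → Fin 2 → ℝ} {N : ℤ}
    (hlam : 1 ≤ |lam|) (hK : 0 ≤ K) (hP : ∀ n, IsUnit (P n).det)
    (hPK : ∀ n z, ‖P n *ᵥ z‖ ≤ K * ‖z‖) (hPinvK : ∀ n z, ‖(P n)⁻¹ *ᵥ z‖ ≤ K * ‖z‖)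
    (hAP : ∀ n, A n * P n = P (n + 1) * !![lam, 0; 0, lam⁻¹])
    (hγ : ∀ n, 0 ≤ γ n) (hG : ∀ n z, ‖G n *ᵥ z‖ ≤ γ n * ‖z‖)
    (hW : ∀ n, W (n + 1) = (A n + G n) *ᵥ W n)
    (hWN : W N = lam ^ N • P N *ᵥ Pi.single 0 1) (m : ℕ) :
    ‖lam ^ (-(N + m)) • W (N + m) - P (N + m) *ᵥ Pi.single 0 1‖ ≤
      K * (Real.exp (K ^ 2 * ∑ k ∈ range m, γ (N + k)) - 1) := by
  have hlam0 : lam ≠ 0 := by rintro rfl; norm_num at hlam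
  have hlam' : |lam⁻¹| ≤ 1 := by rw [abs_inv]; exact inv_le_one_of_one_le₀ hlam
  set e : Fin 2 → ℝ := Pi.single 0 1
  set Z : ℤ → Fin 2 → ℝ := fun n => lam ^ (-n) • (P n)⁻¹ *ᵥ W n
  have hPZ : ∀ n, P n *ᵥ Z n = lam ^ (-n) • W n := fun n => by
    simp only [Z, Matrix.mulVec_smul, Matrix.mulVec_mulVec, Matrix.mul_nonsing_inv _ (hP n),
      Matrix.one_mulVec]
  have hWZ : ∀ n, W n = lam ^ n • P n *ᵥ Z n := fun n => by
    rw [hPZ, smul_smul, ← zpow_add₀ hlam0, add_neg_cancel, zpow_zero, one_smul]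
  have hZN : Z N = e := by
    simp only [Z, hWN, Matrix.mulVec_smul, Matrix.mulVec_mulVec,
      Matrix.nonsing_inv_mul _ (hP N), Matrix.one_mulVec, smul_smul, ← zpow_add₀ hlam0,
      neg_add_cancel, zpow_zero, one_smul]
  let D := (!![1, 0; 0, lam⁻¹ ^ 2] : Matrix (Fin 2) (Fin 2) ℝ).mulVecLin.toAddMonoidHom
  let R : ℤ → (Fin 2 → ℝ) → Fin 2 → ℝ :=
    fun n w => lam⁻¹ • (P (n + 1))⁻¹ *ᵥ (G n *ᵥ (P n *ᵥ w))
  have hZ : ∀ n, Z (n + 1) = D (Z n) + R n (Z n) :=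
    rescaled_transfer_succ_eq hlam0 hP hAP hW hWZ
  have hD : ∀ w, ‖D w‖ ≤ ‖w‖ :=
    norm_mulVec_diag_one_le (by rw [abs_pow]; exact pow_le_one₀ (abs_nonneg _) hlam')
  have hDe : D e = e := by
    ext i; fin_cases i <;> simp [D, e]
  have hR : ∀ n w, ‖R n w‖ ≤ K ^ 2 * γ n * ‖w‖ := fun n w => by
    have := hγ n
    calc ‖R n w‖ ≤ |lam⁻¹| * (K * (γ n * (K * ‖w‖))) := by
          rw [norm_smul, Real.norm_eq_abs]
          gcongr
          refine (hPinvK _ _).trans ?_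
          gcongr
          refine (hG _ _).trans ?_
          gcongr
          exact hPK _ _
      _ ≤ 1 * (K * (γ n * (K * ‖w‖))) := by gcongr
      _ = K ^ 2 * γ n * ‖w‖ := by ring
  have hZm := norm_sub_le_of_perturbed_contraction D hD e hDe (fun k => R (N + k))
    (fun k => K ^ 2 * γ (N + k)) (fun k => by have := hγ (N + k); positivity) (fun k => hR _)
    (fun k => Z (N + k)) (by simpa using hZN)
    (fun k => by simpa [add_assoc] using hZ (N + k)) m
  rw [← mul_sum, show ‖e‖ = 1 by simp [e, Pi.norm_single], mul_one] at hZm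
  calc ‖lam ^ (-(N + m)) • W (N + m) - P (N + m) *ᵥ e‖
        = ‖P (N + m) *ᵥ (Z (N + m) - e)‖ := by
        rw [Matrix.mulVec_sub, hPZ]
    _ ≤ K * ‖Z (N + m) - e‖ := hPK _ _
    _ ≤ K * (Real.exp (K ^ 2 * ∑ k ∈ range m, γ (N + k)) - 1) := by gcongr

theorem stmt18_general (d : ℕ) (α θ : Fin d → ℝ) (v : (Fin d → ℝ) → ℝ) (E : ℝ)
    (lam μ : ℝ) (hlam : 1 < |lam|)
    (B : (Fin d → ℝ) → Matrix (Fin 2) (Fin 2) ℝ)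
    (hdetB : ∀ x, (B x).det = 1)
    (hBbd : ∃ Cb : ℝ, ∀ x, ‖B x‖ ≤ Cb)
    (hconj : ∀ x : Fin d → ℝ,
      (B (x + α))⁻¹ * !![E - v x, -1; 1, 0] * B x = !![lam, μ; 0, lam⁻¹])
    (g : ℤ → ℝ) (hg : Summable fun n : ℤ => |g n|)
    (ε : ℝ) (hε : 0 < ε) :
    ∃ u : ℤ → ℝ,
      (∀ n : ℤ, u (n + 1) + u (n - 1) + (v (θ + (n : ℝ) • α) + g n) * u n = E * u n) ∧
      Filter.limsup (fun n : ℤ => |lam ^ (-n) * u n - B (θ + (n : ℝ) • α) 0 0|)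
        Filter.atTop ≤ ε := by
  set x : ℤ → Fin d → ℝ := fun n => θ + (n : ℝ) • α
  have hx : ∀ n, x n + α = x (n + 1) := fun n => by simp [x, add_smul, add_assoc]
  set T : Matrix (Fin 2) (Fin 2) ℝ := !![1, μ / (lam⁻¹ - lam); 0, 1]
  set P : ℤ → Matrix (Fin 2) (Fin 2) ℝ := fun n => B (x n) * T
  obtain ⟨K, hK, hPK⟩ := exists_norm_mulVec_le_of_det_eq_one B hdetB hBbd T
  have hAP : ∀ n, !![E - v (x n), -1; 1, 0] * P n = P (n + 1) * !![lam, 0; 0, lam⁻¹] :=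
    fun n => Matrix.mul_shear_eq_of_inv_mul_mul_eq (ne_inv_of_one_lt_abs hlam) (by simp [hdetB])
      (hx n ▸ hconj (x n))
  obtain ⟨N, hN⟩ := hg.exists_forall_apply_sum_range_le (fun n => abs_nonneg (g n))
    (φ := fun s => K * (Real.exp (K ^ 2 * s) - 1)) (by fun_prop) (by simp)
    (fun s t hst => by dsimp only; gcongr) hε
  obtain ⟨W, hWN, hW⟩ := exists_transfer_orbit (fun n => E - v (x n) - g n) N
    (lam ^ (N : ℤ) • P N *ᵥ Pi.single 0 1)
  refine ⟨fun n => W n 0, fun n => ?_, ?_⟩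
  · linarith [transfer_orbit_apply_zero hW n]
  refine limsup_le_of_le (isCoboundedUnder_le_of_le atTop fun n => abs_nonneg _)
    (eventually_atTop.2 ⟨N, fun n hn => ?_⟩)
  obtain ⟨m, rfl⟩ := Int.le.dest hn
  have hW' : ∀ n, W (n + 1) = (!![E - v (x n), -1; 1, 0] + !![-g n, 0; 0, 0]) *ᵥ W n :=
    fun n => by
      rw [hW n]; congr 1; ext i j; fin_cases i <;> fin_cases j <;> simp [sub_eq_add_neg]
  have hP00 : ∀ n, P n 0 0 = B (x n) 0 0 := fun n => by
    simp [P, T, Matrix.mul_apply, Fin.sum_univ_two]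
  set Δ := lam ^ (-(N + m : ℤ)) • W (N + m) - P (N + m) *ᵥ Pi.single 0 1
  calc |lam ^ (-(N + m : ℤ)) * W (N + m) 0 - B (x (N + m)) 0 0| ≤ ‖Δ‖ := by
        simpa [Δ, hP00] using norm_le_pi_norm Δ 0
    _ ≤ K * (Real.exp (K ^ 2 * ∑ k ∈ range m, |g (N + k)|) - 1) :=
        norm_zpow_smul_sub_le_of_perturbation hlam.le hK (fun n => by simp [T, hdetB])
          (fun n z => (hPK _ z).1) (fun n z => (hPK _ z).2) hAP (fun n => abs_nonneg (g n))
          (fun n => by simpa using norm_mulVec_fin_two_corner_le (-g n)) hW' hWN m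
    _ ≤ ε := hN m

theorem stmt18 (d : ℕ) (hd : 1 ≤ d) (α θ : Fin d → ℝ) (v : (Fin d → ℝ) → ℝ) (E : ℝ)
    (lam μ : ℝ) (hlam : 1 < |lam|)
    (B : (Fin d → ℝ) → Matrix (Fin 2) (Fin 2) ℝ)
    (hdetB : ∀ x, (B x).det = 1)
    (hBbd : ∃ Cb : ℝ, ∀ x, ‖B x‖ ≤ Cb)
    (hconj : ∀ x : Fin d → ℝ,
      (B (x + α))⁻¹ * !![E - v x, -1; 1, 0] * B x = !![lam, μ; 0, lam⁻¹])
    (g : ℤ → ℝ) (hg : Summable fun n : ℤ => |g n|)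
    (ε : ℝ) (hε : 0 < ε) :
    ∃ u : ℤ → ℝ,
      (∀ n : ℤ, u (n + 1) + u (n - 1) + (v (θ + (n : ℝ) • α) + g n) * u n = E * u n) ∧
      Filter.limsup (fun n : ℤ => |lam ^ (-n) * u n - B (θ + (n : ℝ) • α) 0 0|)
        Filter.atTop ≤ ε :=
  stmt18_general d α θ v E lam μ hlam B hdetB hBbd hconj g hg ε hε
end
end
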